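/- For any complex numbers z₁,…,zₙ and any index 1 ≤ d < n, the product R²(z₁)ᵀ R^{2×2}(z₂)⋯R^{2×2}(z_d) · J · R^{2×2}(z_{d+1})⋯R^{2×2}(z_{n-1}) R²(zₙ) equals Re(z₁* · z₂⋯z_d · z_{d+1}* ⋯ zₙ*). -/

import Mathlib

open Matrix

/-- The identification of `ℂ` with `ℝ²`: `x + yi ↦ (x, y)`. -/
def R2v (z : ℂ) : Fin 2 → ℝ := ![z.re, z.im]

/-- The embedding of `ℂ` into real `2×2` matrices: `x + yi ↦ [[x, -y], [y, x]]`. -/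
def R22 (z : ℂ) : Matrix (Fin 2) (Fin 2) ℝ := !![z.re, -z.im; z.im, z.re]

/-- The matrix `J = diag(1, -1)`. -/
def Jmat : Matrix (Fin 2) (Fin 2) ℝ := !![1, 0; 0, -1]

/-! `R22` is multiplication by a complex number, `Jmat` is conjugation, and the dot product
of `ℝ²` is `Re (conj z * w)`; the chained product is therefore
`Re (conj z₁ · (z₂⋯z_d) · conj (z_{d+1}⋯zₙ))`. -/

lemma R22_one : R22 1 = 1 := by
  rw [R22, Matrix.one_fin_two]
  simp

lemma R22_mul (a b : ℂ) : R22 (a * b) = R22 a * R22 b := by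
  ext i j
  fin_cases i <;> fin_cases j <;> simp [R22, Matrix.mul_apply] <;> ring

lemma prod_map_R22 (L : List ℂ) : (L.map R22).prod = R22 L.prod := by
  induction L with
  | nil => simp [R22_one]
  | cons a t ih => simp [ih, R22_mul]

lemma R22_mulVec_R2v (a w : ℂ) : R22 a *ᵥ R2v w = R2v (a * w) := by
  ext i
  fin_cases i <;> simp [R22, R2v, mulVec, dotProduct] <;> ring

lemma Jmat_mulVec_R2v (w : ℂ) : Jmat *ᵥ R2v w = R2v (starRingEnd ℂ w) := by
  ext i
  fin_cases i <;> simp [Jmat, R2v, mulVec, dotProduct]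

lemma R2v_dotProduct_R2v (z w : ℂ) : R2v z ⬝ᵥ R2v w = (starRingEnd ℂ z * w).re := by
  simp [R2v, dotProduct, Fin.sum_univ_two]

/-- For complex numbers `z₁, …, zₙ` and `1 ≤ d < n` (here `z₁ = z`,
`L₁ = [z₂, …, z_d]`, `L₂ = [z_{d+1}, …, z_{n-1}]`, `zₙ = w`), the product
`R²(z₁)ᵀ R^{2×2}(z₂)⋯R^{2×2}(z_d) · J · R^{2×2}(z_{d+1})⋯R^{2×2}(z_{n-1}) R²(zₙ)`
equals `Re(z₁* · z₂⋯z_d · z_{d+1}* ⋯ zₙ*)`. -/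
theorem chained_product_J_eq_re (z w : ℂ) (L₁ L₂ : List ℂ) :
    R2v z ⬝ᵥ (((L₁.map R22).prod * Jmat * (L₂.map R22).prod).mulVec (R2v w))
      = (starRingEnd ℂ z * L₁.prod * starRingEnd ℂ (L₂.prod * w)).re := by
  rw [prod_map_R22, prod_map_R22, ← mulVec_mulVec, ← mulVec_mulVec, R22_mulVec_R2v,
    Jmat_mulVec_R2v, R22_mulVec_R2v, R2v_dotProduct_R2v, mul_assoc]
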